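/- Let D = {(i_1,j_1),…,(i_m,j_m)} be a set of domino pieces and write S_m(ē_{i_1 j_1},…,ē_{i_m j_m}) = Σ_{i ≤ j} α_{ij} ē_{ij} in the basis {ē_{ij} : i ≤ j} of symmetric matrices. Then for any a ≤ b, the coefficient α_{ab} is nonzero if and only if there exists a train using all the pieces of D that starts with a and ends with b (or vice versa). -/

import Mathlib

/-- `ē i j`: equals `e i j + e j i` for `i ≠ j` and `e i i` for `i = j`. -/
noncomputable def ebar (n : ℕ) (i j : Fin n) : Matrix (Fin n) (Fin n) ℝ :=
  if i = j then Matrix.single i i 1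
  else Matrix.single i j 1 + Matrix.single j i 1

/-- The product `A ∙ B = AB + BA` on `Mₙ(ℝ)`. -/
noncomputable def bullet {n : ℕ} (A B : Matrix (Fin n) (Fin n) ℝ) :
    Matrix (Fin n) (Fin n) ℝ := A * B + B * A

/-- The left-normed product `A₁ ∙ A₂ ∙ ⋯ ∙ Aᵣ = (A₁ ∙ ⋯ ∙ A_{r-1}) ∙ Aᵣ`. -/
noncomputable def leftnorm {n : ℕ} : List (Matrix (Fin n) (Fin n) ℝ) → Matrix (Fin n) (Fin n) ℝ
  | [] => 0
  | x :: xs => xs.foldl bullet x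

/-- `Sₘ(X₁,…,Xₘ) = Σ_{σ ∈ Sₘ} X_{σ(1)} ∙ ⋯ ∙ X_{σ(m)}` (left-normed products). -/
noncomputable def Sm {n : ℕ} (m : ℕ) (x : Fin m → Matrix (Fin n) (Fin n) ℝ) :
    Matrix (Fin n) (Fin n) ℝ :=
  ∑ σ : Equiv.Perm (Fin m), leftnorm (List.ofFn fun t => x (σ t))

/-- A train from `a` to `b` using the multiset `D` of domino pieces: a list of ordered
pairs `(a₁,b₁),…,(aₘ,bₘ)` with `bᵣ = a_{r+1}`, `a₁ = a`, `bₘ = b`, whose multiset of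
unordered pairs equals `D`. -/
def IsTrain {α : Type*} (D : Multiset (Sym2 α)) (a b : α) (L : List (α × α)) : Prop :=
  L.Chain' (fun p q => p.2 = q.1) ∧
  (L.map Prod.fst).head? = some a ∧
  (L.map Prod.snd).getLast? = some b ∧
  (↑(L.map Sym2.mk.uncurry) : Multiset (Sym2 α)) = D


/-! All `ē_{ij}` have nonnegative entries, so nothing cancels in `Sₘ`: an entry of `Sₘ` is positive
iff the same entry of one of its left-normed products is. Since
`(M ∙ ē_{cd})_{ab} = ∑ₖ M_{ak} ē_{cd}(k, b) + ē_{cd}(a, k) M_{kb}`, that entry is positive iff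
`M_{ak} > 0` with `{k, b} = {c, d}`, or `{a, k} = {c, d}` with `M_{kb} > 0`: a positive entry of the
product is a train of the earlier pieces, extended by the new piece at its end or at its start.
Conversely, multiplying the pieces in the order of a train from `a` to `b` keeps a positive
`(a, b)` entry. Finally `α_{ab}` is the `(a, b)` entry of the symmetric matrix `Sₘ`, so both
orientations of the train give the same condition. -/

open Finset

section ebar

variable {n : ℕ}

theorem ebar_apply (i j a b : Fin n) : ebar n i j a b = if s(a, b) = s(i, j) then 1 else 0 := by
  rcases eq_or_ne i j with rfl | hij
  · simp only [ebar, if_true, Matrix.single_apply, Sym2.eq_iff]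
    by_cases ha : i = a <;> by_cases hb : i = b <;> simp [ha, hb, eq_comm]
  · simp only [ebar, hij, if_false, Matrix.add_apply, Matrix.single_apply, Sym2.eq_iff]
    by_cases ha : i = a <;> by_cases hb : j = b <;> grind

theorem ebar_apply_nonneg (i j a b : Fin n) : 0 ≤ ebar n i j a b := by
  rw [ebar_apply]; split_ifs <;> norm_num

theorem ebar_apply_pos_iff {i j a b : Fin n} : 0 < ebar n i j a b ↔ s(a, b) = s(i, j) := by
  rw [ebar_apply]; split_ifs <;> simp_all

theorem ebar_comm (i j : Fin n) : ebar n i j = ebar n j i := by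
  ext a b
  simp only [ebar_apply, Sym2.eq_swap (a := i)]

theorem isSymm_ebar (i j : Fin n) : (ebar n i j).IsSymm := by
  ext a b
  simp only [Matrix.transpose_apply, ebar_apply, Sym2.eq_swap (a := a)]

theorem sum_smul_ebar_apply (α : Fin n → Fin n → ℝ) {a b : Fin n} (hab : a ≤ b) :
    (∑ p ∈ univ.filter (fun p : Fin n × Fin n => p.1 ≤ p.2), α p.1 p.2 • ebar n p.1 p.2) a b =
      α a b := by
  rw [Matrix.sum_apply, sum_eq_single_of_mem (a, b) (by simpa using hab)]
  · simp [ebar_apply]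
  · rintro ⟨i, j⟩ hij hne
    have hij : i ≤ j := (mem_filter.mp hij).2
    rw [Matrix.smul_apply, ebar_apply, if_neg, smul_zero]
    rw [Sym2.eq_iff]
    rintro (⟨rfl, rfl⟩ | ⟨rfl, rfl⟩)
    · exact hne rfl
    · exact hne (by rw [le_antisymm hab hij])

end ebar

namespace Matrix

variable {ι : Type*} [Fintype ι] {A B : Matrix ι ι ℝ}

theorem mul_apply_nonneg (hA : ∀ i j, 0 ≤ A i j) (hB : ∀ i j, 0 ≤ B i j) (i j : ι) :
    0 ≤ (A * B) i j :=
  sum_nonneg fun k _ => mul_nonneg (hA i k) (hB k j)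

theorem mul_apply_pos_iff (hA : ∀ i j, 0 ≤ A i j) (hB : ∀ i j, 0 ≤ B i j) {i j : ι} :
    0 < (A * B) i j ↔ ∃ k, 0 < A i k ∧ 0 < B k j := by
  rw [mul_apply, sum_pos_iff_of_nonneg fun k _ => mul_nonneg (hA i k) (hB k j)]
  simp only [mem_univ, true_and]
  refine exists_congr fun k => ⟨fun h => ?_, fun h => mul_pos h.1 h.2⟩
  exact ⟨(hA i k).lt_of_ne (by rintro h'; simp [← h'] at h),
    (hB k j).lt_of_ne (by rintro h'; simp [← h'] at h)⟩

end Matrix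

theorem List.Perm.exists_ofFn_comp_perm_eq {γ : Type*} {m : ℕ} {g : Fin m → γ} {l : List γ}
    (h : l.Perm (List.ofFn g)) : ∃ σ : Equiv.Perm (Fin m), List.ofFn (g ∘ σ) = l := by
  classical
  have hlen : l.length = m := by simpa using h.length_eq
  let τ : Fin m → Fin m := fun t => Fin.cast (List.length_ofFn) (h.idxBij (Fin.cast hlen.symm t))
  have hτ : τ.Injective := fun s t hst => by
    simpa [τ, Fin.cast_inj, h.idxBij_injective.eq_iff] using hst
  refine ⟨Equiv.ofBijective τ (Finite.injective_iff_bijective.mp hτ), ?_⟩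
  refine List.ext_getElem (by simp [hlen]) fun i _ h₂ => ?_
  rw [List.getElem_ofFn, ← h.getElem_idxBij_eq_getElem ⟨i, h₂⟩, List.getElem_ofFn]
  rfl

section bullet

variable {n : ℕ} {A B : Matrix (Fin n) (Fin n) ℝ}

theorem bullet_apply_nonneg (hA : ∀ i j, 0 ≤ A i j) (hB : ∀ i j, 0 ≤ B i j) (i j : Fin n) :
    0 ≤ bullet A B i j :=
  add_nonneg (Matrix.mul_apply_nonneg hA hB i j) (Matrix.mul_apply_nonneg hB hA i j)

theorem bullet_apply_pos_iff (hA : ∀ i j, 0 ≤ A i j) (hB : ∀ i j, 0 ≤ B i j) {i j : Fin n} :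
    0 < bullet A B i j ↔ 0 < (A * B) i j ∨ 0 < (B * A) i j := by
  have h₁ := Matrix.mul_apply_nonneg hA hB i j
  have h₂ := Matrix.mul_apply_nonneg hB hA i j
  simp only [bullet, Matrix.add_apply]
  constructor
  · intro h; by_contra! h'; linarith
  · rintro (h | h) <;> linarith

theorem leftnorm_induction {P : Matrix (Fin n) (Fin n) ℝ → Prop} (h0 : P 0)
    (hbullet : ∀ A B, P A → P B → P (bullet A B)) {l : List (Matrix (Fin n) (Fin n) ℝ)}
    (hl : ∀ B ∈ l, P B) : P (leftnorm l) := by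
  cases l with
  | nil => exact h0
  | cons A l =>
    exact List.foldlRecOn l bullet (hl A List.mem_cons_self)
      fun M hM B hB => hbullet M B hM (hl B (List.mem_cons_of_mem A hB))

theorem leftnorm_apply_nonneg {l : List (Matrix (Fin n) (Fin n) ℝ)}
    (hl : ∀ B ∈ l, ∀ i j, 0 ≤ B i j) (i j : Fin n) : 0 ≤ leftnorm l i j :=
  leftnorm_induction (P := fun M => ∀ i j, 0 ≤ M i j) (fun _ _ => le_rfl)
    (fun _ _ hA hB => bullet_apply_nonneg hA hB) hl i j

theorem Matrix.IsSymm.bullet (hA : A.IsSymm) (hB : B.IsSymm) : (bullet A B).IsSymm := by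
  rw [Matrix.IsSymm, _root_.bullet, Matrix.transpose_add, Matrix.transpose_mul,
    Matrix.transpose_mul, hA.eq, hB.eq, add_comm]

theorem Matrix.IsSymm.leftnorm {l : List (Matrix (Fin n) (Fin n) ℝ)}
    (hl : ∀ B ∈ l, B.IsSymm) : (_root_.leftnorm l).IsSymm :=
  leftnorm_induction Matrix.isSymm_zero (fun _ _ hA hB => hA.bullet hB) hl

end bullet

namespace IsTrain

variable {α : Type*} {D : Multiset (Sym2 α)} {a b c : α} {L : List (α × α)}

theorem singleton (a b : α) : IsTrain {s(a, b)} a b [(a, b)] :=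
  ⟨List.isChain_singleton _, rfl, rfl, rfl⟩

theorem ne_nil (h : IsTrain D a b L) : L ≠ [] := by
  rintro rfl
  simp [IsTrain] at h

theorem cons (h : IsTrain D c b L) (a : α) : IsTrain (s(a, c) ::ₘ D) a b ((a, c) :: L) := by
  have hne := h.ne_nil
  obtain ⟨hchain, hhead, hlast, rfl⟩ := h
  refine ⟨List.isChain_cons.mpr ⟨fun q hq => ?_, hchain⟩, rfl, ?_, rfl⟩
  · rw [List.head?_map, hq] at hhead
    exact (Option.some.inj hhead).symm
  · rwa [List.map_cons, List.getLast?_cons_of_ne_nil (by simpa using hne)]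

theorem concat (h : IsTrain D a c L) (b : α) :
    IsTrain (s(c, b) ::ₘ D) a b (L ++ [(c, b)]) := by
  have hne := h.ne_nil
  obtain ⟨hchain, hhead, hlast, rfl⟩ := h
  refine ⟨List.isChain_append.mpr ⟨hchain, List.isChain_singleton _, fun p hp q hq => ?_⟩,
    ?_, by simp, ?_⟩
  · rw [List.getLast?_map, hp] at hlast
    obtain rfl : (c, b) = q := by simpa using hq
    simpa using hlast
  · rwa [List.map_append, List.head?_append_of_ne_nil _ (by simpa using hne)]
  · rw [List.map_append, List.map_singleton, Multiset.cons_coe]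
    exact Multiset.coe_eq_coe.mpr (List.perm_append_singleton _ _)

end IsTrain

section train

variable {n : ℕ} {a b : Fin n}

theorem exists_isTrain_of_foldl_bullet_apply_pos {D : Multiset (Sym2 (Fin n))}
    {M : Matrix (Fin n) (Fin n) ℝ} (hM : ∀ i j, 0 ≤ M i j)
    (hMD : ∀ i j, 0 < M i j → ∃ L, IsTrain D i j L) (l : List (Fin n × Fin n))
    (h : 0 < (l.map (Function.uncurry (ebar n))).foldl bullet M a b) :
    ∃ L, IsTrain ((l.map Sym2.mk.uncurry : Multiset (Sym2 (Fin n))) + D) a b L := by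
  induction l generalizing M D with
  | nil => simpa using hMD a b h
  | cons p l ih =>
    have hE : ∀ i j, 0 ≤ ebar n p.1 p.2 i j := ebar_apply_nonneg _ _
    have hstep : ∀ i j, 0 < bullet M (ebar n p.1 p.2) i j →
        ∃ L, IsTrain (s(p.1, p.2) ::ₘ D) i j L := by
      intro i j hij
      rcases (bullet_apply_pos_iff hM hE).mp hij with h | h
      · obtain ⟨k, hik, hkj⟩ := (Matrix.mul_apply_pos_iff hM hE).mp h
        obtain ⟨L, hL⟩ := hMD i k hik
        exact ⟨_, ebar_apply_pos_iff.mp hkj ▸ hL.concat j⟩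
      · obtain ⟨k, hik, hkj⟩ := (Matrix.mul_apply_pos_iff hE hM).mp h
        obtain ⟨L, hL⟩ := hMD k j hkj
        exact ⟨_, ebar_apply_pos_iff.mp hik ▸ hL.cons i⟩
    obtain ⟨L, hL⟩ := ih (bullet_apply_nonneg hM hE) hstep h
    rw [List.map_cons, ← Multiset.cons_coe, Multiset.cons_add, ← Multiset.add_cons]
    exact ⟨L, hL⟩

theorem exists_isTrain_of_leftnorm_apply_pos (l : List (Fin n × Fin n))
    (h : 0 < leftnorm (l.map (Function.uncurry (ebar n))) a b) :
    ∃ L, IsTrain ↑(l.map Sym2.mk.uncurry) a b L := by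
  cases l with
  | nil => exact absurd h (lt_irrefl 0)
  | cons p l =>
    have hsingle : ∀ i j, 0 < ebar n p.1 p.2 i j → ∃ L, IsTrain {s(p.1, p.2)} i j L :=
      fun i j hij => ⟨_, ebar_apply_pos_iff.mp hij ▸ IsTrain.singleton i j⟩
    obtain ⟨L, hL⟩ :=
      exists_isTrain_of_foldl_bullet_apply_pos (ebar_apply_nonneg _ _) hsingle l h
    rw [List.map_cons, ← Multiset.cons_coe, ← Multiset.singleton_add, add_comm]
    exact ⟨L, hL⟩

-- The pair `(a, c)` heading the chain stands for the positive entry `M a c`.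
theorem foldl_bullet_apply_pos {M : Matrix (Fin n) (Fin n) ℝ} (hM : ∀ i j, 0 ≤ M i j) {c : Fin n}
    (hac : 0 < M a c) {L : List (Fin n × Fin n)}
    (hL : ((a, c) :: L).IsChain (fun p q => p.2 = q.1)) :
    0 < (L.map (Function.uncurry (ebar n))).foldl bullet M a
      ((L.map Prod.snd).getLast?.getD c) := by
  induction L generalizing M c with
  | nil => simpa using hac
  | cons p L ih =>
    rw [List.map_cons, List.foldl_cons, List.map_cons, List.getLast?_cons, Option.getD_some]
    obtain ⟨hcp, hpL⟩ := List.isChain_cons.mp hL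
    obtain ⟨hpq, hL⟩ := List.isChain_cons.mp hpL
    have hcp : c = p.1 := hcp p rfl
    have hE : ∀ i j, 0 ≤ ebar n p.1 p.2 i j := ebar_apply_nonneg _ _
    refine ih (bullet_apply_nonneg hM hE) ?_ (List.isChain_cons.mpr ⟨hpq, hL⟩)
    refine (bullet_apply_pos_iff hM hE).mpr (Or.inl ((Matrix.mul_apply_pos_iff hM hE).mpr ?_))
    exact ⟨c, hac, ebar_apply_pos_iff.mpr (by rw [hcp])⟩

theorem IsTrain.leftnorm_apply_pos {D : Multiset (Sym2 (Fin n))} {L : List (Fin n × Fin n)}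
    (h : IsTrain D a b L) : 0 < leftnorm (L.map (Function.uncurry (ebar n))) a b := by
  obtain ⟨hchain, hhead, hlast, -⟩ := h
  cases L with
  | nil => simp at hhead
  | cons p L =>
    obtain ⟨a', c⟩ := p
    obtain rfl : a' = a := by simpa using hhead
    obtain rfl : (L.map Prod.snd).getLast?.getD c = b := by
      simpa [List.getLast?_cons] using hlast
    exact foldl_bullet_apply_pos (ebar_apply_nonneg a' c) (ebar_apply_pos_iff.mpr rfl) hchain

end train

section Sm

variable {n m : ℕ}

theorem isSymm_Sm {x : Fin m → Matrix (Fin n) (Fin n) ℝ} (hx : ∀ t, (x t).IsSymm) :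
    (Sm m x).IsSymm :=
  sum_induction _ Matrix.IsSymm (fun _ _ => Matrix.IsSymm.add) Matrix.isSymm_zero
    fun _ _ => Matrix.IsSymm.leftnorm (List.forall_mem_ofFn_iff.mpr fun _ => hx _)

theorem Sm_apply_nonneg {x : Fin m → Matrix (Fin n) (Fin n) ℝ} (hx : ∀ t i j, 0 ≤ x t i j)
    (i j : Fin n) : 0 ≤ Sm m x i j := by
  rw [Sm, Matrix.sum_apply]
  exact sum_nonneg fun σ _ => leftnorm_apply_nonneg (List.forall_mem_ofFn_iff.mpr fun t => hx _) i j

theorem Sm_apply_pos_iff {x : Fin m → Matrix (Fin n) (Fin n) ℝ} (hx : ∀ t i j, 0 ≤ x t i j)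
    {i j : Fin n} :
    0 < Sm m x i j ↔ ∃ σ : Equiv.Perm (Fin m), 0 < leftnorm (List.ofFn fun t => x (σ t)) i j := by
  rw [Sm, Matrix.sum_apply, sum_pos_iff_of_nonneg fun σ _ =>
    leftnorm_apply_nonneg (List.forall_mem_ofFn_iff.mpr fun t => hx _) i j]
  simp only [mem_univ, true_and]

theorem Sm_ebar_apply_pos_iff (f : Fin m → Fin n × Fin n) {a b : Fin n} :
    0 < Sm m (fun t => ebar n (f t).1 (f t).2) a b ↔
      ∃ L, IsTrain (univ.val.map fun t => Sym2.mk.uncurry (f t)) a b L := by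
  have hpieces : univ.val.map (fun t => Sym2.mk.uncurry (f t)) =
      ↑(List.ofFn (Sym2.mk.uncurry ∘ f)) :=
    Fin.univ_val_map _
  have hlist : ∀ σ : Equiv.Perm (Fin m), (List.ofFn fun t => ebar n (f (σ t)).1 (f (σ t)).2) =
      (List.ofFn (f ∘ σ)).map (Function.uncurry (ebar n)) := fun σ => by rw [List.map_ofFn]; rfl
  rw [Sm_apply_pos_iff fun t => ebar_apply_nonneg _ _]
  constructor
  · rintro ⟨σ, hσ⟩
    rw [hlist] at hσ
    obtain ⟨L, hL⟩ := exists_isTrain_of_leftnorm_apply_pos _ hσ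
    refine ⟨L, hpieces ▸ ?_⟩
    rwa [List.map_ofFn, ← Function.comp_assoc,
      Multiset.coe_eq_coe.mpr (σ.ofFn_comp_perm _)] at hL
  · rintro ⟨L, hL⟩
    obtain ⟨σ, hσ⟩ := (Multiset.coe_eq_coe.mp (hL.2.2.2.trans hpieces)).exists_ofFn_comp_perm_eq
    let ebarSym : Sym2 (Fin n) → Matrix (Fin n) (Fin n) ℝ := Sym2.lift ⟨ebar n, ebar_comm⟩
    have hfactor : Function.uncurry (ebar n) = ebarSym ∘ Sym2.mk.uncurry := rfl
    refine ⟨σ, ?_⟩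
    rw [hlist, hfactor, ← List.map_map, List.map_ofFn, ← Function.comp_assoc, hσ, List.map_map,
      ← hfactor]
    exact hL.leftnorm_apply_pos

end Sm

/-- Writing `Sₘ(ē_{i₁j₁},…,ē_{iₘjₘ}) = Σ_{i ≤ j} α i j • ē i j` in the basis
`{ē i j : i ≤ j}`, the coefficient `α a b` (for `a ≤ b`) is nonzero iff there is a
train using all pieces of `D` starting with `a` and ending with `b`, or vice versa. -/
theorem coeff_ne_zero_iff_exists_train (n m : ℕ) (f : Fin m → Fin n × Fin n)
    (α : Fin n → Fin n → ℝ)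
    (hα : Sm m (fun t => ebar n (f t).1 (f t).2) =
      ∑ p ∈ Finset.univ.filter (fun p : Fin n × Fin n => p.1 ≤ p.2),
        α p.1 p.2 • ebar n p.1 p.2)
    (a b : Fin n) (hab : a ≤ b) :
    α a b ≠ 0 ↔
      ((∃ L, IsTrain (Finset.univ.val.map fun t => Sym2.mk.uncurry (f t)) a b L) ∨
       (∃ L, IsTrain (Finset.univ.val.map fun t => Sym2.mk.uncurry (f t)) b a L)) := by
  have hcoeff : α a b = Sm m (fun t => ebar n (f t).1 (f t).2) a b := by
    rw [hα, sum_smul_ebar_apply α hab]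
  have hsymm : Sm m (fun t => ebar n (f t).1 (f t).2) b a =
      Sm m (fun t => ebar n (f t).1 (f t).2) a b :=
    (isSymm_Sm fun t => isSymm_ebar _ _).apply a b
  rw [← Sm_ebar_apply_pos_iff, ← Sm_ebar_apply_pos_iff, hsymm, or_self, hcoeff,
    (Sm_apply_nonneg (fun t => ebar_apply_nonneg _ _) a b).lt_iff_ne']
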